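/- arXiv:1610.05928 — 4 statements merged into one kernel-verified Lean document; each statement's English description precedes it below -/
import Mathlib

section
/- Let $\{\lambda_n\}$ be a strictly increasing sequence of positive reals tending to infinity, and $\{r_n\}$ complex numbers such that $\sum_{T\leq \lambda_n\leq T+1}|r_n| \ll T^{-\beta}$ for $T\gg 1$, with $0<\beta\leq 1$. Let $0<\alpha\leq 1$, $a\geq 0$, and $B\geq 2$. Then for all $\mu>0$ one has $\sum_{0<\lambda_n<\mu} |r_n|\frac{\log^a(\mu-\lambda_n+2B)}{(\mu-\lambda_n+B+1)^\alpha} \ll \frac{\log^{a+1}(\mu+2B)}{(\mu+B+1)^{\alpha+\beta-1}}$, with implied constant independent of $\mu$. -/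
open Filter Finset

/-!
Group the `λ_n < μ` by `j = ⌊λ_n⌋`. On the `j`-th unit interval the mass of `|r_n|` is
`≪ max(1, j)^{-β}` (for small `j` because only finitely many `λ_n` lie there), and the kernel is at
most `log^a(μ + 2B) / (μ - j + B)^α`. With `x = max(1, j)` and `y = μ - j + B`, both at most
`P = μ + B + 1` and with `x + y ≥ P / 2`, one of `x, y` is comparable to `P`, which gives
`x^{-β} y^{-α} ≪ P^{1-α-β} (1/x + 1/y)`. Summing over `0 ≤ j ≤ μ`, both harmonic sums are
`≪ log(μ + 2B)`, which produces the extra logarithm.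
-/

lemma Filter.Tendsto.finite_setOf_le {f : ℕ → ℝ} (hf : Tendsto f atTop atTop) (X : ℝ) :
    {n | f n ≤ X}.Finite := by
  simpa [← Nat.cofinite_eq_atTop, not_lt] using hf.eventually_gt_atTop X

lemma tsum_ite_eq_sum_toFinset {p : ℕ → Prop} [DecidablePred p] (hp : {n | p n}.Finite)
    (g : ℕ → ℝ) : ∑' n, (if p n then g n else 0) = ∑ n ∈ hp.toFinset, g n := by
  rw [tsum_eq_sum (s := hp.toFinset) (by simp_all)]
  exact sum_congr rfl (by simp_all)

lemma inv_rpow_mul_rpow_le_of_le_four_mul {θ τ P x y : ℝ} (hθ1 : θ ≤ 1) (hτ : 0 ≤ τ)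
    (hτ1 : τ ≤ 1) (hx : 0 < x) (hxP : x ≤ P) (hy : 0 < y) (hPy : P ≤ 4 * y) :
    (x ^ θ * y ^ τ)⁻¹ ≤ 4 * P ^ (1 - θ - τ) * x⁻¹ := by
  have hP : 0 < P := hx.trans_le hxP
  calc (x ^ θ * y ^ τ)⁻¹ = x ^ (1 - θ) * (y ^ τ)⁻¹ * x⁻¹ := by
        rw [Real.rpow_sub hx, Real.rpow_one]; field_simp
    _ ≤ P ^ (1 - θ) * ((P / 4) ^ τ)⁻¹ * x⁻¹ := by
        gcongr
        linarith
    _ = 4 ^ τ * P ^ (1 - θ - τ) * x⁻¹ := by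
        rw [Real.div_rpow hP.le (by norm_num), Real.rpow_sub hP (1 - θ) τ]
        field_simp
    _ ≤ 4 * P ^ (1 - θ - τ) * x⁻¹ := by
        gcongr
        exact Real.rpow_le_self_of_one_le (by norm_num) hτ1 |>.trans_eq (by norm_num)

lemma inv_rpow_mul_rpow_le {α β P x y : ℝ} (hα : 0 ≤ α) (hα1 : α ≤ 1) (hβ : 0 ≤ β)
    (hβ1 : β ≤ 1) (hx : 0 < x) (hxP : x ≤ P) (hy : 0 < y) (hyP : y ≤ P)
    (hP : P ≤ 2 * (x + y)) :
    (x ^ β * y ^ α)⁻¹ ≤ 4 * P ^ (1 - α - β) * (x⁻¹ + y⁻¹) := by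
  have : 0 ≤ 4 * P ^ (1 - α - β) := by positivity [hx.trans_le hxP]
  rcases le_total P (4 * y) with h | h
  · calc (x ^ β * y ^ α)⁻¹ ≤ 4 * P ^ (1 - β - α) * x⁻¹ :=
          inv_rpow_mul_rpow_le_of_le_four_mul hβ1 hα hα1 hx hxP hy h
      _ ≤ 4 * P ^ (1 - α - β) * (x⁻¹ + y⁻¹) := by
          rw [sub_right_comm]; gcongr; exact le_add_of_nonneg_right (inv_nonneg.2 hy.le)
  · calc (x ^ β * y ^ α)⁻¹ = (y ^ α * x ^ β)⁻¹ := by rw [mul_comm]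
      _ ≤ 4 * P ^ (1 - α - β) * y⁻¹ :=
          inv_rpow_mul_rpow_le_of_le_four_mul hα1 hβ hβ1 hy hyP hx (by linarith)
      _ ≤ 4 * P ^ (1 - α - β) * (x⁻¹ + y⁻¹) := by
          gcongr; exact le_add_of_nonneg_left (inv_nonneg.2 hx.le)

lemma exists_sum_le_div_max_one_rpow {lam w : ℕ → ℝ} (hw : ∀ n, 0 ≤ w n)
    (hlim : Tendsto lam atTop atTop) {β C T₀ : ℝ} (hβ : 0 ≤ β) (hC : 0 < C) (hT₀ : 1 ≤ T₀)
    (hcoef : ∀ T ≥ T₀, (∑' n, if T ≤ lam n ∧ lam n ≤ T + 1 then w n else 0) ≤ C / T ^ β) :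
    ∃ D > 0, ∀ (j : ℕ) (s : Finset ℕ), (∀ n ∈ s, j ≤ lam n ∧ lam n ≤ j + 1) →
      ∑ n ∈ s, w n ≤ D / max 1 (j : ℝ) ^ β := by
  set K := ∑ n ∈ (hlim.finite_setOf_le (T₀ + 1)).toFinset, w n
  have hK : 0 ≤ K := sum_nonneg fun n _ => hw n
  have hT₀β : 1 ≤ T₀ ^ β := Real.one_le_rpow hT₀ hβ
  refine ⟨(C + K) * T₀ ^ β, by positivity, fun j s hs => ?_⟩
  rcases le_or_gt T₀ j with hj | hj
  · have hsum : Summable fun n => if (j : ℝ) ≤ lam n ∧ lam n ≤ j + 1 then w n else 0 :=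
      summable_of_ne_finset_zero (s := (hlim.finite_setOf_le (j + 1)).toFinset) (by simp_all)
    calc ∑ n ∈ s, w n = ∑ n ∈ s, if (j : ℝ) ≤ lam n ∧ lam n ≤ j + 1 then w n else 0 :=
          sum_congr rfl fun n hn => (if_pos (hs n hn)).symm
      _ ≤ C / (j : ℝ) ^ β :=
          (hsum.sum_le_tsum s fun n _ => ite_nonneg (hw n) le_rfl).trans (hcoef j hj)
      _ ≤ (C + K) * T₀ ^ β / max 1 (j : ℝ) ^ β := by
          rw [max_eq_right (hT₀.trans hj)]
          gcongr
          nlinarith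
  · have hsub : s ⊆ (hlim.finite_setOf_le (T₀ + 1)).toFinset := fun n hn => by
      simp only [Set.Finite.mem_toFinset, Set.mem_ofPred_eq]; linarith [(hs n hn).2]
    calc ∑ n ∈ s, w n ≤ K := sum_le_sum_of_subset_of_nonneg hsub fun n _ _ => hw n
      _ ≤ C + K := by linarith
      _ = (C + K) * T₀ ^ β / T₀ ^ β := by field_simp
      _ ≤ (C + K) * T₀ ^ β / max 1 (j : ℝ) ^ β := by
          gcongr
          exact max_le hT₀ hj.le

lemma log_rpow_div_rpow_le {a α B μ t u : ℝ} (ha : 0 ≤ a) (hα : 0 ≤ α) (hB : 1 ≤ B)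
    (ht : 0 ≤ t) (htu : t < u + 1) (huμ : u ≤ μ) :
    Real.log (μ - t + 2 * B) ^ a / (μ - t + B + 1) ^ α
      ≤ Real.log (μ + 2 * B) ^ a / (μ - u + B) ^ α := by
  have hlog : 0 ≤ Real.log (μ - t + 2 * B) := Real.log_nonneg (by linarith)
  refine div_le_div₀ (Real.rpow_nonneg (hlog.trans ?_) a) (Real.rpow_le_rpow hlog ?_ ha)
    (Real.rpow_pos_of_pos (by linarith) α) (Real.rpow_le_rpow (by linarith) (by linarith) hα)
  all_goals exact Real.log_le_log (by linarith) (by linarith)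

lemma sum_range_inv_add_one_le (N : ℕ) :
    ∑ i ∈ range N, ((i : ℝ) + 1)⁻¹ ≤ 1 + Real.log N := by
  simpa [harmonic] using harmonic_le_one_add_log N

lemma sum_range_floor_inv_le_log {μ B : ℝ} (hμ : 0 ≤ μ) (hB : 2 ≤ B) :
    ∑ j ∈ range (⌊μ⌋₊ + 1), ((max 1 (j : ℝ))⁻¹ + (μ - j + B)⁻¹)
      ≤ 6 * Real.log (μ + 2 * B) := by
  set M := ⌊μ⌋₊
  have hM : (M : ℝ) ≤ μ := Nat.floor_le hμ
  have hmax : ∀ j ∈ range (M + 1), (max 1 (j : ℝ))⁻¹ ≤ 2 * ((j : ℝ) + 1)⁻¹ := by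
    intro j _
    rcases Nat.eq_zero_or_pos j with rfl | hj
    · norm_num
    · have hj : (1 : ℝ) ≤ j := by exact_mod_cast hj
      rw [max_eq_right hj, ← div_eq_mul_inv, inv_eq_one_div,
        div_le_div_iff₀ (by positivity) (by positivity)]
      linarith
  have hrefl : ∑ j ∈ range (M + 1), (μ - j + B)⁻¹ ≤ ∑ j ∈ range (M + 1), ((j : ℝ) + 1)⁻¹ := by
    rw [← sum_range_reflect]
    refine sum_le_sum fun j hj => inv_anti₀ (by positivity) ?_
    rw [mem_range] at hj
    rw [Nat.cast_sub (by omega)]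
    push_cast
    linarith
  have hL : 1 ≤ Real.log (μ + 2 * B) := by
    rw [Real.le_log_iff_exp_le (by linarith)]
    linarith [Real.exp_one_lt_d9]
  have hlog : Real.log (M + 1 : ℕ) ≤ Real.log (μ + 2 * B) :=
    Real.log_le_log (by positivity) (by push_cast; linarith)
  calc ∑ j ∈ range (M + 1), ((max 1 (j : ℝ))⁻¹ + (μ - j + B)⁻¹)
      ≤ 3 * ∑ j ∈ range (M + 1), ((j : ℝ) + 1)⁻¹ := by
        rw [sum_add_distrib]
        linarith [sum_le_sum hmax, mul_sum (range (M + 1)) (fun j : ℕ => ((j : ℝ) + 1)⁻¹) 2]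
    _ ≤ 3 * (1 + Real.log (M + 1 : ℕ)) := by gcongr; exact sum_range_inv_add_one_le _
    _ ≤ 6 * Real.log (μ + 2 * B) := by linarith

lemma sum_mul_log_rpow_div_rpow_le {lam w : ℕ → ℝ} (hw : ∀ n, 0 ≤ w n) {a α β B D μ : ℝ}
    (ha : 0 ≤ a) (hα : 0 ≤ α) (hα1 : α ≤ 1) (hβ : 0 ≤ β) (hβ1 : β ≤ 1) (hB : 1 ≤ B)
    (hD : 0 ≤ D) {j : ℕ} (hjμ : (j : ℝ) ≤ μ) {s : Finset ℕ}
    (hs : ∀ n ∈ s, j ≤ lam n ∧ lam n < j + 1) (hmass : ∑ n ∈ s, w n ≤ D / max 1 (j : ℝ) ^ β) :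
    ∑ n ∈ s, w n * Real.log (μ - lam n + 2 * B) ^ a / (μ - lam n + B + 1) ^ α
      ≤ 4 * D * Real.log (μ + 2 * B) ^ a * (μ + B + 1) ^ (1 - α - β)
        * ((max 1 (j : ℝ))⁻¹ + (μ - j + B)⁻¹) := by
  set L := Real.log (μ + 2 * B)
  set x := max 1 (j : ℝ)
  set y := μ - j + B
  have hL : 0 ≤ L ^ a := Real.rpow_nonneg (Real.log_nonneg (by linarith)) a
  have hx : 1 ≤ x := le_max_left _ _
  calc ∑ n ∈ s, w n * Real.log (μ - lam n + 2 * B) ^ a / (μ - lam n + B + 1) ^ α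
      ≤ ∑ n ∈ s, w n * (L ^ a / y ^ α) := sum_le_sum fun n hn => by
        rw [mul_div_assoc]
        exact mul_le_mul_of_nonneg_left (log_rpow_div_rpow_le ha hα hB
          ((Nat.cast_nonneg j).trans (hs n hn).1) (hs n hn).2 hjμ) (hw n)
    _ = (∑ n ∈ s, w n) * (L ^ a / y ^ α) := (sum_mul ..).symm
    _ ≤ D / x ^ β * (L ^ a / y ^ α) := by gcongr
    _ = D * L ^ a * (x ^ β * y ^ α)⁻¹ := by ring
    _ ≤ D * L ^ a * (4 * (μ + B + 1) ^ (1 - α - β) * (x⁻¹ + y⁻¹)) := by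
        gcongr
        refine inv_rpow_mul_rpow_le hα hα1 hβ hβ1 (by linarith) ?_ (by linarith) ?_ ?_
        · exact max_le (by linarith) (by linarith)
        · linarith [Nat.cast_nonneg (α := ℝ) j]
        · linarith [le_max_right 1 (j : ℝ)]
    _ = _ := by ring

theorem stmt0_general
    (lam : ℕ → ℝ) (r : ℕ → ℂ) (β a B α : ℝ)
    (hpos : ∀ n, 0 < lam n)
    (hlim : Tendsto lam atTop atTop)
    (hβ : 0 < β) (hβ1 : β ≤ 1)
    (hcoef : ∃ C T₀ : ℝ, 0 < C ∧ 1 ≤ T₀ ∧ ∀ T ≥ T₀,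
      (∑' n, if T ≤ lam n ∧ lam n ≤ T + 1 then ‖r n‖ else 0) ≤ C / T ^ β)
    (hα : 0 < α) (hα1 : α ≤ 1) (ha : 0 ≤ a) (hB : 2 ≤ B) :
    ∃ C : ℝ, 0 < C ∧ ∀ μ > (0:ℝ),
      (∑' n, if lam n < μ then
          ‖r n‖ * Real.log (μ - lam n + 2 * B) ^ a
            / (μ - lam n + B + 1) ^ α else 0)
        ≤ C * Real.log (μ + 2 * B) ^ (a + 1) / (μ + B + 1) ^ (α + β - 1) := by
  obtain ⟨C, T₀, hC, hT₀, hcoef⟩ := hcoef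
  obtain ⟨D, hD, hmass⟩ :=
    exists_sum_le_div_max_one_rpow (fun n => norm_nonneg (r n)) hlim hβ.le hC hT₀ hcoef
  refine ⟨24 * D, by positivity, fun μ hμ => ?_⟩
  have hF : {n | lam n < μ}.Finite :=
    (hlim.finite_setOf_le μ).subset (Set.ofPred_subset_ofPred.2 fun _ => le_of_lt)
  have hmaps : ∀ n ∈ hF.toFinset, ⌊lam n⌋₊ ∈ range (⌊μ⌋₊ + 1) := fun n hn => by
    simp only [Set.Finite.mem_toFinset, Set.mem_ofPred_eq] at hn
    exact mem_range_succ_iff.2 (Nat.floor_le_floor hn.le)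
  have hfiber : ∀ j, ∀ n ∈ hF.toFinset.filter (⌊lam ·⌋₊ = j), (j : ℝ) ≤ lam n ∧ lam n < j + 1 :=
    fun j n hn => (Nat.floor_eq_iff (hpos n).le).1 (mem_filter.1 hn).2
  have hL : 0 < Real.log (μ + 2 * B) := Real.log_pos (by linarith)
  rw [tsum_ite_eq_sum_toFinset hF, ← sum_fiberwise_of_maps_to hmaps]
  calc _ ≤ ∑ j ∈ range (⌊μ⌋₊ + 1), 4 * D * Real.log (μ + 2 * B) ^ a * (μ + B + 1) ^ (1 - α - β)
          * ((max 1 (j : ℝ))⁻¹ + (μ - j + B)⁻¹) := by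
        refine sum_le_sum fun j hj => sum_mul_log_rpow_div_rpow_le (fun n => norm_nonneg (r n))
          ha hα.le hα1 hβ.le hβ1 (by linarith) hD.le ?_ (hfiber j)
          (hmass j _ fun n hn => (hfiber j n hn).imp_right le_of_lt)
        exact (Nat.cast_le.2 (mem_range_succ_iff.1 hj)).trans (Nat.floor_le hμ.le)
    _ ≤ 4 * D * Real.log (μ + 2 * B) ^ a * (μ + B + 1) ^ (1 - α - β)
          * (6 * Real.log (μ + 2 * B)) := by
        rw [← mul_sum]
        gcongr
        exact sum_range_floor_inv_le_log hμ.le hB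
    _ = 24 * D * Real.log (μ + 2 * B) ^ (a + 1) / (μ + B + 1) ^ (α + β - 1) := by
        rw [Real.rpow_add_one hL.ne', div_eq_mul_inv, ← Real.rpow_neg (by linarith)]
        ring_nf

/-- Lemma 2.1: unit-interval coefficient sums, bound for the "difference" kernel. -/
theorem stmt0
    (lam : ℕ → ℝ) (r : ℕ → ℂ) (β a B α : ℝ)
    (hmono : StrictMono lam) (hpos : ∀ n, 0 < lam n)
    (hlim : Tendsto lam atTop atTop)
    (hβ : 0 < β) (hβ1 : β ≤ 1)
    (hcoef : ∃ C T₀ : ℝ, 0 < C ∧ 1 ≤ T₀ ∧ ∀ T ≥ T₀,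
      (∑' n, if T ≤ lam n ∧ lam n ≤ T + 1 then ‖r n‖ else 0) ≤ C / T ^ β)
    (hα : 0 < α) (hα1 : α ≤ 1) (ha : 0 ≤ a) (hB : 2 ≤ B) :
    ∃ C : ℝ, 0 < C ∧ ∀ μ > (0:ℝ),
      (∑' n, if lam n < μ then
          ‖r n‖ * Real.log (μ - lam n + 2 * B) ^ a
            / (μ - lam n + B + 1) ^ α else 0)
        ≤ C * Real.log (μ + 2 * B) ^ (a + 1) / (μ + B + 1) ^ (α + β - 1) :=
  stmt0_general lam r β a B α hpos hlim hβ hβ1 hcoef hα hα1 ha hB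
end

section
/- Let $\{\lambda_n\}$ be a strictly increasing sequence of positive reals tending to infinity and $\{r_n\}$ complex numbers with $\sum_{T\leq \lambda_n\leq T+1}|r_n| \ll T^{-\beta}$ for $T\gg 1$, where $\beta>1-1/n$ for some integer $n\geq 2$. For $0\leq s\leq n$ let $\mathcal{O}_s$ be the set of $n$-tuples $(\lambda_{j_1},\ldots,\lambda_{j_n})$ of frequencies with $\lambda_{j_1}+\cdots+\lambda_{j_s}-\lambda_{j_{s+1}}-\cdots-\lambda_{j_n}\neq 0$. Then the sum $\sum_{s=0}^n\sum_{\mathcal{O}_s} \frac{|r_{j_1}\cdots r_{j_n}|}{1+Y|\lambda_{j_1}+\cdots+\lambda_{j_s}-\lambda_{j_{s+1}}-\cdots-\lambda_{j_n}|}$ is uniformly bounded for $Y\geq 1$. -/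
/-!
Since `Y ≥ 1`, each term is at most its value at `Y = 1`, and that sum is finite even with the
diagonal terms included. Grouping the indices `j` by the unit box `⌊λ_j⌋ = κ`, the hypothesis
bounds the mass of box `κ` by a multiple of `(1 + κ)^(-β)`, and passing to integer parts changes
the linear form by at most `n`; so it suffices that the lattice sum
`∑_{k ∈ ℕⁿ} ∏_j (1 + k_j)^(-β) (1 + |∑_j ε_j k_j|)^(-1)` is finite. Where `k_i` is the largest
coordinate, move the exponent `1/n` from `k_i` onto every other coordinate: these become
summable because `β + 1/n > 1`, while `(1 + k_i)^(-δ)` with `δ > 0` is left. Young's inequality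
splits `(1 + k_i)^(-δ) (1 + |z|)^(-1)` into `(1 + k_i)^(-2) + (1 + |z|)^(-q)` with `q > 1`, and
for fixed other coordinates `k_i ↦ z` is injective, so both pieces are summable.
All sums are taken in `ℝ≥0∞`, where they can be rearranged before convergence is known.
-/

open Filter Topology

open scoped ENNReal

noncomputable def polyDecay (a x : ℝ) : ℝ≥0∞ := ENNReal.ofReal ((1 + |x|) ^ (-a))

lemma polyDecay_add (a b x : ℝ) : polyDecay (a + b) x = polyDecay a x * polyDecay b x := by
  rw [polyDecay, polyDecay, polyDecay, ← ENNReal.ofReal_mul (by positivity), neg_add,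
    Real.rpow_add (by positivity)]

lemma polyDecay_natCast_mul (m : ℕ) (a x : ℝ) : polyDecay (m * a) x = polyDecay a x ^ m := by
  rw [polyDecay, polyDecay, ← ENNReal.ofReal_pow (by positivity),
    ← Real.rpow_mul_natCast (by positivity)]
  ring_nf

lemma polyDecay_anti_abs {a x y : ℝ} (ha : 0 ≤ a) (h : |x| ≤ |y|) :
    polyDecay a y ≤ polyDecay a x :=
  ENNReal.ofReal_le_ofReal <|
    Real.rpow_le_rpow_of_nonpos (by positivity) (by linarith) (by linarith)

lemma polyDecay_anti_exponent {a b : ℝ} (h : a ≤ b) (x : ℝ) : polyDecay b x ≤ polyDecay a x :=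
  ENNReal.ofReal_le_ofReal <|
    Real.rpow_le_rpow_of_exponent_le (by linarith [abs_nonneg x]) (by linarith)

lemma polyDecay_mul_polyDecay_le {p q : ℝ} (hpq : p.HolderConjugate q) (a b x y : ℝ) :
    polyDecay a x * polyDecay b y ≤ polyDecay (p * a) x + polyDecay (q * b) y := by
  have hx : 0 ≤ (1 + |x|) ^ (-a) := by positivity
  have hy : 0 ≤ (1 + |y|) ^ (-b) := by positivity
  rw [polyDecay, polyDecay, polyDecay, polyDecay, ← ENNReal.ofReal_mul hx,
    ← ENNReal.ofReal_add (by positivity) (by positivity)]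
  refine ENNReal.ofReal_le_ofReal ((Real.young_inequality_of_nonneg hx hy hpq).trans ?_)
  rw [← Real.rpow_mul (by positivity), ← Real.rpow_mul (by positivity), neg_mul, neg_mul,
    mul_comm a, mul_comm b]
  gcongr
  · exact div_le_self (by positivity) hpq.lt.le
  · exact div_le_self (by positivity) hpq.symm.lt.le

lemma tsum_polyDecay_int_ne_top {a : ℝ} (ha : 1 < a) : ∑' z : ℤ, polyDecay a z ≠ ∞ := by
  have hsum : Summable fun z : ℤ ↦ (1 + |(z : ℝ)|) ^ (-a) := by
    refine ((Real.summable_one_div_int_add_rpow (1 / 2) a).2 ha).of_nonneg_of_le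
      (fun z ↦ by positivity) fun z ↦ ?_
    have hz : 0 < |(z : ℝ) + 1 / 2| := by
      refine abs_pos.2 fun h ↦ ?_
      have : 2 * z + 1 = 0 := by exact_mod_cast (by linarith : (2 * z + 1 : ℝ) = 0)
      omega
    rw [Real.rpow_neg (by positivity), one_div]
    gcongr
    linarith [abs_add_le (z : ℝ) (1 / 2), abs_of_pos (one_half_pos (α := ℝ))]
  simp only [polyDecay]
  rw [← ENNReal.ofReal_tsum_of_nonneg (fun z ↦ by positivity) hsum]
  exact ENNReal.ofReal_ne_top

lemma tsum_polyDecay_affine_le (a : ℝ) {e : ℤ} (he : e ≠ 0) (d : ℤ) :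
    ∑' t : ℕ, polyDecay a ((e * t + d : ℤ) : ℝ) ≤ ∑' z : ℤ, polyDecay a z :=
  ENNReal.tsum_comp_le_tsum_of_injective (f := fun t : ℕ ↦ e * t + d)
    (fun s t h ↦ by simpa [he] using h) (fun z : ℤ ↦ polyDecay a z)

lemma tsum_polyDecay_nat_ne_top {a : ℝ} (ha : 1 < a) : ∑' t : ℕ, polyDecay a t ≠ ∞ :=
  ne_top_of_le_ne_top (tsum_polyDecay_int_ne_top ha)
    (by simpa using tsum_polyDecay_affine_le a one_ne_zero 0)

theorem ENNReal.tsum_fin_pi_prod {α : Type*} : ∀ {n : ℕ} (f : Fin n → α → ℝ≥0∞),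
    ∑' g : Fin n → α, ∏ i, f i (g i) = ∏ i, ∑' a, f i a
  | 0, f => by simp
  | n + 1, f => by
    rw [← (Fin.consEquiv fun _ ↦ α).tsum_eq, ENNReal.tsum_prod']
    simp [Fin.prod_univ_succ, ENNReal.tsum_mul_left, ENNReal.tsum_mul_right,
      ENNReal.tsum_fin_pi_prod]

lemma tsum_prod_succAbove_mul_le {α : Type*} {m : ℕ} (i : Fin (m + 1))
    (f : Fin m → α → ℝ≥0∞) (h : (Fin (m + 1) → α) → ℝ≥0∞) {M : ℝ≥0∞}
    (hM : ∀ y, ∑' a, h (i.insertNth a y) ≤ M) :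
    ∑' k : Fin (m + 1) → α, (∏ j, f j (k (i.succAbove j))) * h k ≤
      (∏ j, ∑' a, f j a) * M := by
  rw [← (Fin.insertNthEquiv (fun _ ↦ α) i).tsum_eq, ENNReal.tsum_prod', ENNReal.tsum_comm]
  simp only [Fin.insertNthEquiv_apply, Fin.insertNth_apply_succAbove, ENNReal.tsum_mul_left]
  calc _ ≤ ∑' y : Fin m → α, (∏ j, f j (y j)) * M :=
        ENNReal.tsum_le_tsum fun y ↦ by gcongr; exact hM y
    _ = _ := by rw [ENNReal.tsum_mul_right, ENNReal.tsum_fin_pi_prod]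

lemma prod_polyDecay_le_of_forall_abs_le {m : ℕ} {x : Fin (m + 1) → ℝ} {i : Fin (m + 1)}
    (hi : ∀ j, |x j| ≤ |x i|) (b : ℝ) {t : ℝ} (ht : 0 ≤ t) :
    ∏ j, polyDecay b (x j) ≤
      polyDecay (b - m * t) (x i) * ∏ j, polyDecay (b + t) (x (i.succAbove j)) := by
  have hxi : polyDecay b (x i) = polyDecay (b - m * t) (x i) * ∏ _j : Fin m, polyDecay t (x i) := by
    rw [Finset.prod_const, Finset.card_univ, Fintype.card_fin, ← polyDecay_natCast_mul,
      ← polyDecay_add, sub_add_cancel]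
  calc ∏ j, polyDecay b (x j)
      = polyDecay b (x i) * ∏ j, polyDecay b (x (i.succAbove j)) := Fin.prod_univ_succAbove _ i
    _ = polyDecay (b - m * t) (x i) *
          ∏ j, (polyDecay t (x i) * polyDecay b (x (i.succAbove j))) := by
        rw [hxi, mul_assoc, Finset.prod_mul_distrib]
    _ ≤ polyDecay (b - m * t) (x i) *
          ∏ j, (polyDecay t (x (i.succAbove j)) * polyDecay b (x (i.succAbove j))) := by
        gcongr with j
        exact polyDecay_anti_abs ht (hi _)
    _ = _ := by simp_rw [← polyDecay_add, add_comm t]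

lemma prod_polyDecay_mul_polyDecay_le_sum {m : ℕ} {δ q : ℝ} (hδ : 0 < δ)
    (hpq : (δ / 2)⁻¹.HolderConjugate q) (k : Fin (m + 1) → ℕ) (z : ℝ) :
    (∏ j, polyDecay (1 - 1 / (m + 1) + δ) (k j)) * polyDecay 1 z ≤
      ∑ i, (∏ j, polyDecay (1 + δ) (k (i.succAbove j))) * (polyDecay 2 (k i) + polyDecay q z) := by
  obtain ⟨i, -, hi⟩ := Finset.exists_max_image Finset.univ k Finset.univ_nonempty
  -- the exponent `1 / (m + 1)` is moved from the largest coordinate to each of the others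
  have hmove := prod_polyDecay_le_of_forall_abs_le (x := fun j ↦ (k j : ℝ)) (i := i)
    (fun j ↦ by simpa using hi j (Finset.mem_univ j)) (1 - 1 / (m + 1) + δ)
    (t := 1 / (m + 1)) (by positivity)
  have hexp : 1 - 1 / (m + 1) + δ - m * (1 / (m + 1)) = δ := by field_simp; ring
  have hexp' : 1 - 1 / (m + 1) + δ + 1 / (m + 1) = 1 + δ := by ring
  rw [hexp, hexp'] at hmove
  calc (∏ j, polyDecay (1 - 1 / (m + 1) + δ) (k j)) * polyDecay 1 z
      ≤ (polyDecay δ (k i) * ∏ j, polyDecay (1 + δ) (k (i.succAbove j))) * polyDecay 1 z := by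
        gcongr
    _ = (∏ j, polyDecay (1 + δ) (k (i.succAbove j))) * (polyDecay δ (k i) * polyDecay 1 z) := by
        ring
    _ ≤ (∏ j, polyDecay (1 + δ) (k (i.succAbove j))) * (polyDecay 2 (k i) + polyDecay q z) := by
        gcongr
        simpa [hδ.ne'] using polyDecay_mul_polyDecay_le hpq δ 1 (k i) z
    _ ≤ _ := Finset.single_le_sum
        (f := fun i ↦ (∏ j, polyDecay (1 + δ) (k (i.succAbove j))) *
          (polyDecay 2 (k i) + polyDecay q z)) (fun _ _ ↦ zero_le) (Finset.mem_univ i)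

lemma tsum_prod_polyDecay_mul_polyDecay_ne_top {m : ℕ} {b : ℝ} (hb : 1 - 1 / (m + 1) < b)
    (ε : Fin (m + 1) → ℤ) (hε : ∀ i, ε i ≠ 0) :
    ∑' k : Fin (m + 1) → ℕ, (∏ j, polyDecay b (k j)) *
      polyDecay 1 ((∑ j, ε j * k j : ℤ) : ℝ) ≠ ∞ := by
  obtain ⟨δ, hδ, hδ2, hδb⟩ : ∃ δ : ℝ, 0 < δ ∧ δ < 2 ∧ 1 - 1 / (m + 1) + δ ≤ b :=
    ⟨min (b - (1 - 1 / (m + 1))) 1, lt_min (by linarith) one_pos,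
      by linarith [min_le_right (b - (1 - 1 / (m + 1))) 1],
      by linarith [min_le_left (b - (1 - 1 / (m + 1))) 1]⟩
  set q := (1 - δ / 2)⁻¹
  have hpq : (δ / 2)⁻¹.HolderConjugate q :=
    Real.HolderConjugate.inv_one_sub_inv (by positivity) (by linarith)
  set z : (Fin (m + 1) → ℕ) → ℝ := fun k ↦ ((∑ j, ε j * k j : ℤ) : ℝ)
  have hpiece : ∀ i, ∑' k : Fin (m + 1) → ℕ, (∏ j, polyDecay (1 + δ) (k (i.succAbove j))) *
      (polyDecay 2 (k i) + polyDecay q (z k)) ≠ ∞ := by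
    intro i
    refine ne_top_of_le_ne_top ?_ (tsum_prod_succAbove_mul_le i
      (fun _ (t : ℕ) ↦ polyDecay (1 + δ) t) _
      (M := ∑' t : ℕ, polyDecay 2 t + ∑' z : ℤ, polyDecay q z) fun y ↦ ?_)
    · exact ENNReal.mul_ne_top
        (ENNReal.prod_ne_top fun j _ ↦ tsum_polyDecay_nat_ne_top (by linarith))
        (ENNReal.add_ne_top.2 ⟨tsum_polyDecay_nat_ne_top one_lt_two,
          tsum_polyDecay_int_ne_top hpq.symm.lt⟩)
    · rw [ENNReal.tsum_add]
      gcongr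
      · simp
      · simp only [z, Fin.sum_univ_succAbove _ i, Fin.insertNth_apply_same,
          Fin.insertNth_apply_succAbove]
        exact tsum_polyDecay_affine_le q (hε i) _
  refine ne_top_of_le_ne_top (ENNReal.sum_ne_top.2 fun i (_ : i ∈ Finset.univ) ↦ hpiece i) ?_
  rw [← Summable.tsum_finsetSum fun i _ ↦ ENNReal.summable]
  refine ENNReal.tsum_le_tsum fun k ↦
    le_trans ?_ (prod_polyDecay_mul_polyDecay_le_sum hδ hpq k (z k))
  gcongr with j
  exact polyDecay_anti_exponent hδb _

lemma tsum_prod_mul_comp_le {α β : Type*} [DecidableEq β] {n : ℕ} (φ : α → β)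
    (a : α → ℝ≥0∞) (c : β → ℝ≥0∞) (hc : ∀ κ, ∑' j, (if φ j = κ then a j else 0) ≤ c κ)
    (g : (Fin n → β) → ℝ≥0∞) :
    ∑' J : Fin n → α, (∏ i, a (J i)) * g (φ ∘ J) ≤ ∑' k : Fin n → β, (∏ i, c (k i)) * g k := by
  have hfiber : ∀ J : Fin n → α, (∏ i, a (J i)) * g (φ ∘ J) =
      ∑' k : Fin n → β, (∏ i, if φ (J i) = k i then a (J i) else 0) * g k := by
    intro J
    rw [tsum_eq_single (φ ∘ J)]
    · simp
    · intro k hk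
      obtain ⟨i, hi⟩ := Function.ne_iff.1 hk
      rw [Finset.prod_eq_zero (Finset.mem_univ i) (if_neg (Ne.symm hi)), zero_mul]
  rw [tsum_congr hfiber, ENNReal.tsum_comm]
  refine ENNReal.tsum_le_tsum fun k ↦ ?_
  rw [ENNReal.tsum_mul_right, ENNReal.tsum_fin_pi_prod fun i j ↦ if φ j = k i then a j else 0]
  gcongr with i
  exact hc _

lemma polyDecay_one_le_mul_of_abs_sub_le {x y E : ℝ} (hE : 0 ≤ E) (h : |x - y| ≤ E) :
    polyDecay 1 x ≤ ENNReal.ofReal (1 + E) * polyDecay 1 y := by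
  simp only [polyDecay, Real.rpow_neg_one]
  rw [← ENNReal.ofReal_mul (by positivity)]
  refine ENNReal.ofReal_le_ofReal ?_
  rw [← div_eq_mul_inv, inv_eq_one_div, div_le_div_iff₀ (by positivity) (by positivity)]
  nlinarith [abs_sub_abs_le_abs_sub y x, abs_sub_comm x y, mul_nonneg hE (abs_nonneg x)]

lemma abs_sum_mul_sub_sum_mul_floor_le {ι : Type*} [Fintype ι] (ε : ι → ℤ) {x : ι → ℝ}
    (hx : ∀ i, 0 ≤ x i) :
    |∑ i, ε i * x i - ((∑ i, ε i * ⌊x i⌋₊ : ℤ) : ℝ)| ≤ ∑ i, |(ε i : ℝ)| := by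
  push_cast
  rw [← Finset.sum_sub_distrib]
  refine (Finset.abs_sum_le_sum_abs _ _).trans (Finset.sum_le_sum fun i _ ↦ ?_)
  rw [← mul_sub, abs_mul]
  refine mul_le_of_le_one_right (abs_nonneg _) ?_
  rw [abs_of_nonneg (sub_nonneg.2 (Nat.floor_le (hx i)))]
  linarith [Nat.lt_floor_add_one (x i)]

lemma tsum_le_toReal_tsum_of_le {α : Type*} {f : α → ℝ} {g : α → ℝ≥0∞}
    (hg : ∑' a, g a ≠ ∞) (hf₀ : ∀ a, 0 ≤ f a) (hfg : ∀ a, f a ≤ (g a).toReal) :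
    ∑' a, f a ≤ (∑' a, g a).toReal := by
  rw [ENNReal.tsum_toReal_eq (ENNReal.ne_top_of_tsum_ne_top hg)]
  exact Summable.tsum_le_tsum hfg ((ENNReal.summable_toReal hg).of_nonneg_of_le hf₀ hfg)
    (ENNReal.summable_toReal hg)

lemma exists_tsum_floor_eq_le {E : Type*} [SeminormedAddCommGroup E] {lam : ℕ → ℝ}
    (r : ℕ → E) (hpos : ∀ j, 0 ≤ lam j) (hlim : Tendsto lam atTop atTop) {β C : ℝ}
    (hβ : 0 ≤ β) (hC : 0 ≤ C)
    (hwin : ∀ᶠ T in atTop,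
      (∑' j, if T ≤ lam j ∧ lam j ≤ T + 1 then ‖r j‖ else 0) ≤ C / T ^ β) :
    ∃ B : ℝ, ∀ κ : ℕ, ∑' j, (if ⌊lam j⌋₊ = κ then ENNReal.ofReal ‖r j‖ else 0) ≤
      ENNReal.ofReal B * polyDecay β κ := by
  set S : ℝ → ℝ := fun T ↦ ∑' j, if T ≤ lam j ∧ lam j ≤ T + 1 then ‖r j‖ else 0
  have hS : ∀ κ : ℕ, ∑' j, (if ⌊lam j⌋₊ = κ then ENNReal.ofReal ‖r j‖ else 0) ≤
      ENNReal.ofReal (S κ) := by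
    intro κ
    have hsupp : ∀ᶠ j in cofinite,
        (if (κ : ℝ) ≤ lam j ∧ lam j ≤ κ + 1 then ‖r j‖ else 0) = 0 := by
      rw [Nat.cofinite_eq_atTop]
      filter_upwards [hlim.eventually_gt_atTop ((κ : ℝ) + 1)] with j hj
      exact if_neg fun h ↦ by linarith [h.2]
    rw [ENNReal.ofReal_tsum_of_nonneg (fun j ↦ by positivity)
      (summable_of_hasFiniteSupport (Filter.eventually_cofinite.1 hsupp))]
    refine ENNReal.tsum_le_tsum fun j ↦ ?_
    split_ifs with hκ hwin'
    · exact le_rfl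
    · subst hκ
      exact absurd ⟨Nat.floor_le (hpos j), (Nat.lt_floor_add_one _).le⟩ hwin'
    · exact zero_le
    · exact zero_le
  have hbdd : BddAbove (Set.range fun κ : ℕ ↦ S κ * (1 + κ) ^ β) := by
    refine IsBoundedUnder.bddAbove_range (isBoundedUnder_of_eventually_le (a := C * 2 ^ β) ?_)
    filter_upwards [tendsto_natCast_atTop_atTop.eventually hwin, eventually_ge_atTop 1]
      with κ hκ hκ1
    have hκ1 : (1 : ℝ) ≤ κ := by exact_mod_cast hκ1
    calc S κ * (1 + κ) ^ β ≤ C / (κ : ℝ) ^ β * (2 * κ) ^ β := by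
          gcongr
          linarith
      _ = C * 2 ^ β := by
          rw [Real.mul_rpow zero_le_two (by positivity)]
          field_simp
  obtain ⟨B, hB⟩ := hbdd
  refine ⟨B, fun κ ↦ (hS κ).trans ?_⟩
  rw [polyDecay, ← ENNReal.ofReal_mul' (by positivity)]
  refine ENNReal.ofReal_le_ofReal ?_
  rw [Nat.abs_cast, Real.rpow_neg (by positivity), ← div_eq_mul_inv, le_div_iff₀ (by positivity)]
  exact hB ⟨κ, rfl⟩

lemma div_one_add_mul_abs_le_toReal {P L Y : ℝ} (hP : 0 ≤ P) (hY : 1 ≤ Y) :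
    P / (1 + Y * |L|) ≤ (ENNReal.ofReal P * polyDecay 1 L).toReal := by
  rw [polyDecay, ← ENNReal.ofReal_mul hP, ENNReal.toReal_ofReal (by positivity),
    Real.rpow_neg_one, ← div_eq_mul_inv]
  exact div_le_div_of_nonneg_left hP (by positivity) (by nlinarith [abs_nonneg L])

theorem tsum_prod_norm_mul_polyDecay_ne_top {E : Type*} [SeminormedAddCommGroup E] {lam : ℕ → ℝ}
    (r : ℕ → E) (hpos : ∀ j, 0 ≤ lam j) (hlim : Tendsto lam atTop atTop) {m : ℕ} {β C : ℝ}
    (hβ : 1 - 1 / (m + 1) < β) (hC : 0 ≤ C)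
    (hwin : ∀ᶠ T in atTop,
      (∑' j, if T ≤ lam j ∧ lam j ≤ T + 1 then ‖r j‖ else 0) ≤ C / T ^ β)
    (ε : Fin (m + 1) → ℤ) (hε : ∀ i, ε i ≠ 0) :
    ∑' J : Fin (m + 1) → ℕ, (∏ i, ENNReal.ofReal ‖r (J i)‖) *
      polyDecay 1 (∑ i, ε i * lam (J i)) ≠ ∞ := by
  have hβ₀ : 0 ≤ β := by
    have : 1 / ((m : ℝ) + 1) ≤ 1 :=
      div_le_one_of_le₀ (le_add_of_nonneg_left m.cast_nonneg) (by positivity)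
    linarith
  obtain ⟨B, hB⟩ := exists_tsum_floor_eq_le r hpos hlim hβ₀ hC hwin
  set D := ∑ i, |(ε i : ℝ)|
  set g : (Fin (m + 1) → ℕ) → ℝ≥0∞ := fun k ↦ polyDecay 1 ((∑ i, ε i * k i : ℤ) : ℝ)
  have hbox : ∀ J : Fin (m + 1) → ℕ, polyDecay 1 (∑ i, ε i * lam (J i)) ≤
      ENNReal.ofReal (1 + D) * g ((fun j ↦ ⌊lam j⌋₊) ∘ J) := fun J ↦
    polyDecay_one_le_mul_of_abs_sub_le (by positivity)
      (abs_sum_mul_sub_sum_mul_floor_le ε fun i ↦ hpos (J i))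
  refine ne_top_of_le_ne_top ?_ <| calc
    ∑' J : Fin (m + 1) → ℕ, (∏ i, ENNReal.ofReal ‖r (J i)‖) *
        polyDecay 1 (∑ i, ε i * lam (J i))
      ≤ ∑' J : Fin (m + 1) → ℕ, ENNReal.ofReal (1 + D) *
          ((∏ i, ENNReal.ofReal ‖r (J i)‖) * g ((fun j ↦ ⌊lam j⌋₊) ∘ J)) := by
        refine ENNReal.tsum_le_tsum fun J ↦ ?_
        rw [mul_left_comm]
        gcongr
        exact hbox J
    _ ≤ ENNReal.ofReal (1 + D) *
          ∑' k : Fin (m + 1) → ℕ, (∏ i, ENNReal.ofReal B * polyDecay β (k i)) * g k := by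
        rw [ENNReal.tsum_mul_left]
        gcongr ENNReal.ofReal (1 + D) * ?_
        exact tsum_prod_mul_comp_le _ _ _ hB g
    _ = ENNReal.ofReal (1 + D) * (ENNReal.ofReal B ^ (m + 1) *
          ∑' k : Fin (m + 1) → ℕ, (∏ i, polyDecay β (k i)) * g k) := by
        simp_rw [Finset.prod_mul_distrib, Finset.prod_const, Finset.card_univ, Fintype.card_fin,
          mul_assoc, ENNReal.tsum_mul_left]
  exact ENNReal.mul_ne_top ENNReal.ofReal_ne_top (ENNReal.mul_ne_top
    (ENNReal.pow_ne_top ENNReal.ofReal_ne_top) (tsum_prod_polyDecay_mul_polyDecay_ne_top hβ ε hε))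

theorem stmt2_general
    (lam : ℕ → ℝ) (r : ℕ → ℂ) (β : ℝ) (n : ℕ)
    (hpos : ∀ m, 0 < lam m)
    (hlim : Tendsto lam atTop atTop)
    (hn : 2 ≤ n) (hβ : β > 1 - 1 / (n : ℝ))
    (hcoef : ∃ C T₀ : ℝ, 0 < C ∧ 1 ≤ T₀ ∧ ∀ T ≥ T₀,
      (∑' m, if T ≤ lam m ∧ lam m ≤ T + 1 then ‖r m‖ else 0) ≤ C / T ^ β) :
    ∃ C : ℝ, ∀ Y ≥ (1:ℝ),
      (∑ s ∈ Finset.range (n + 1), ∑' J : Fin n → ℕ,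
        (if (∑ i : Fin n, (if (i : ℕ) < s then (1:ℝ) else -1) * lam (J i)) ≠ 0 then
          (∏ i : Fin n, ‖r (J i)‖) /
            (1 + Y * |∑ i : Fin n, (if (i : ℕ) < s then (1:ℝ) else -1) * lam (J i)|)
        else 0)) ≤ C := by
  obtain ⟨C, T₀, hC, -, hwin⟩ := hcoef
  obtain ⟨m, rfl⟩ : ∃ m, n = m + 1 := ⟨n - 1, by omega⟩
  set ε : ℕ → Fin (m + 1) → ℤ := fun s i ↦ if (i : ℕ) < s then 1 else -1 with hε
  have hfin : ∀ s, ∑' J : Fin (m + 1) → ℕ, (∏ i, ENNReal.ofReal ‖r (J i)‖) *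
      polyDecay 1 (∑ i, ε s i * lam (J i)) ≠ ∞ := fun s ↦
    tsum_prod_norm_mul_polyDecay_ne_top r (fun j ↦ (hpos j).le) hlim (by simpa using hβ) hC.le
      (eventually_atTop.2 ⟨T₀, hwin⟩) (ε s) fun i ↦ by simp only [hε]; split_ifs <;> decide
  refine ⟨∑ s ∈ Finset.range (m + 2), (∑' J : Fin (m + 1) → ℕ, (∏ i, ENNReal.ofReal ‖r (J i)‖) *
      polyDecay 1 (∑ i, ε s i * lam (J i))).toReal, fun Y hY ↦ Finset.sum_le_sum fun s _ ↦ ?_⟩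
  have hcoe : ∀ i : Fin (m + 1), ((ε s i : ℤ) : ℝ) = if (i : ℕ) < s then 1 else -1 := by
    intro i
    simp only [hε]
    split_ifs <;> simp
  refine tsum_le_toReal_tsum_of_le (hfin s) (fun J ↦ by split_ifs <;> positivity) fun J ↦ ?_
  simp only [hcoe, ← ENNReal.ofReal_prod_of_nonneg fun i _ ↦ norm_nonneg (r (J i))]
  split_ifs
  · exact div_one_add_mul_abs_le_toReal (by positivity) hY
  · exact ENNReal.toReal_nonneg

/-- Lemma 2.3: the off-diagonal multidimensional sum is uniformly bounded in `Y ≥ 1`. -/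
theorem stmt2
    (lam : ℕ → ℝ) (r : ℕ → ℂ) (β : ℝ) (n : ℕ)
    (hmono : StrictMono lam) (hpos : ∀ m, 0 < lam m)
    (hlim : Tendsto lam atTop atTop)
    (hn : 2 ≤ n) (hβ : β > 1 - 1 / (n : ℝ))
    (hcoef : ∃ C T₀ : ℝ, 0 < C ∧ 1 ≤ T₀ ∧ ∀ T ≥ T₀,
      (∑' m, if T ≤ lam m ∧ lam m ≤ T + 1 then ‖r m‖ else 0) ≤ C / T ^ β) :
    ∃ C : ℝ, ∀ Y ≥ (1:ℝ),
      (∑ s ∈ Finset.range (n + 1), ∑' J : Fin n → ℕ,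
        (if (∑ i : Fin n, (if (i : ℕ) < s then (1:ℝ) else -1) * lam (J i)) ≠ 0 then
          (∏ i : Fin n, ‖r (J i)‖) /
            (1 + Y * |∑ i : Fin n, (if (i : ℕ) < s then (1:ℝ) else -1) * lam (J i)|)
        else 0)) ≤ C :=
  stmt2_general lam r β n hpos hlim hn hβ hcoef
end

section
/- Let $\{\lambda_n\}$ be a strictly increasing sequence of positive reals tending to infinity and $\{r_n\}$ complex numbers with $\sum_{T\leq\lambda_n\leq T+1}|r_n|\ll T^{-\beta}$ for $T\gg 1$, where $\beta>1-1/n$ for some integer $n\geq 2$. Then the series $\sum |r_{j_1}\cdots r_{j_n}|$, taken over all $n$-tuples of frequencies satisfying $\lambda_{j_1}+\cdots+\lambda_{j_s}-\lambda_{j_{s+1}}-\cdots-\lambda_{j_n}=0$ for any fixed $0\leq s\leq n$, converges. -/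
/-!
Summing the coefficient bound over unit windows gives both `|r m| ≪ λ_m ^ (-β)` and, with
`δ = β / (n - 1)`, the convergence of `∑ |r m| λ_m ^ (-δ)`, because `β + δ > 1` is exactly
`β > 1 - 1/n`. On the hyperplane `∑ ± λ_{j_i} = 0` the index carrying the largest frequency
is determined by the others, and its coefficient is at most
`λ_max ^ (-β) = ∏_{i ≠ p} λ_max ^ (-δ) ≤ ∏_{i ≠ p} λ_{j_i} ^ (-δ)`. Hence the tuple sum is
dominated by `n` copies of `(∑ |r m| λ_m ^ (-δ)) ^ (n - 1)`.
-/

open Filter Topology Finset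

noncomputable def windowSum {α : Type*} (lam a : α → ℝ) (T : ℝ) : ℝ :=
  ∑' m, if T ≤ lam m ∧ lam m ≤ T + 1 then a m else 0

section Window

variable {α : Type*} {lam a : α → ℝ}

theorem finite_setOf_le_of_tendsto (hlim : Tendsto lam cofinite atTop) (X : ℝ) :
    {m | lam m ≤ X}.Finite := by
  simpa using eventually_cofinite.mp (hlim.eventually_gt_atTop X)

theorem summable_window (hlim : Tendsto lam cofinite atTop) (T : ℝ) :
    Summable fun m => if T ≤ lam m ∧ lam m ≤ T + 1 then a m else 0 :=
  summable_of_hasFiniteSupport <| (finite_setOf_le_of_tendsto hlim (T + 1)).subset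
    fun _ hm => by_contra fun h => hm (if_neg fun hT => h hT.2)

theorem tsum_subtype_le_windowSum (ha : 0 ≤ a) (hlim : Tendsto lam cofinite atTop) {T : ℝ}
    {s : Set α} (hs : ∀ m ∈ s, T ≤ lam m ∧ lam m ≤ T + 1) :
    ∑' m : s, a m ≤ windowSum lam a T := by
  calc ∑' m : s, a m = ∑' m : s, if T ≤ lam m ∧ lam m ≤ T + 1 then a m else 0 :=
        tsum_congr fun m => (if_pos (hs m m.2)).symm
    _ ≤ windowSum lam a T :=
        (summable_window hlim T).tsum_subtype_le _ s fun m => ite_nonneg (ha m) le_rfl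

theorem exists_le_mul_rpow_neg_of_windowSum_le (ha : 0 ≤ a) (hlam : ∀ m, 0 < lam m)
    (hlim : Tendsto lam cofinite atTop) {C T₀ β : ℝ}
    (hwin : ∀ T ≥ T₀, windowSum lam a T ≤ C / T ^ β) :
    ∃ D, 0 ≤ D ∧ ∀ m, a m ≤ D * lam m ^ (-β) := by
  have hbdd : IsBoundedUnder (· ≤ ·) cofinite fun m => a m * lam m ^ β := by
    refine ⟨C, (hlim.eventually_ge_atTop T₀).mono fun m hm => ?_⟩
    have hsingle : a m ≤ windowSum lam a (lam m) := by
      simpa using tsum_subtype_le_windowSum ha hlim (s := {m}) (T := lam m) (by simp)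
    have hpow := Real.rpow_pos_of_pos (hlam m) β
    simpa [← le_div_iff₀ hpow] using hsingle.trans (hwin _ hm)
  obtain ⟨D, hD⟩ := hbdd.bddAbove_range_of_cofinite
  refine ⟨max D 0, le_max_right _ _, fun m => ?_⟩
  have hm : a m * lam m ^ β ≤ max D 0 := (hD ⟨m, rfl⟩).trans (le_max_left _ _)
  rwa [Real.rpow_neg (hlam m).le, ← div_eq_mul_inv, le_div_iff₀ (Real.rpow_pos_of_pos (hlam m) β)]

theorem summable_mul_rpow_neg_of_windowSum_le (ha : 0 ≤ a) (hlam : ∀ m, 0 < lam m)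
    (hlim : Tendsto lam cofinite atTop) {C T₀ β δ : ℝ}
    (hwin : ∀ T ≥ T₀, windowSum lam a T ≤ C / T ^ β) (hδ : 0 ≤ δ) (hβδ : 1 < β + δ) :
    Summable fun m => a m * lam m ^ (-δ) := by
  set fiber : ℕ → Set α := fun k => {m | ⌊lam m⌋₊ = k}
  have hfiber : ∀ k, ∀ m ∈ fiber k, (k : ℝ) ≤ lam m ∧ lam m ≤ k + 1 := fun k m hm => by
    subst hm
    exact ⟨Nat.floor_le (hlam m).le, (Nat.lt_floor_add_one _).le⟩
  have hfin : ∀ k, Finite (fiber k) := fun k =>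
    ((finite_setOf_le_of_tendsto hlim (k + 1)).subset fun m hm => (hfiber k m hm).2).to_subtype
  have hw0 : ∀ m, 0 ≤ a m * lam m ^ (-δ) := fun m =>
    mul_nonneg (ha m) (Real.rpow_nonneg (hlam m).le _)
  refine (summable_partition hw0 (s := fiber) fun m => ⟨_, rfl, fun _ hk => hk.symm⟩).mpr
    ⟨fun k => Summable.of_finite, ?_⟩
  refine Summable.of_norm_bounded_eventually_nat
    ((Real.summable_nat_rpow.mpr (by linarith : -(β + δ) < -1)).mul_left C) ?_
  filter_upwards [eventually_ge_atTop ⌈T₀⌉₊, eventually_ge_atTop 1] with k hkT hk1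
  have hk : (0 : ℝ) < k := by exact_mod_cast hk1
  rw [Real.norm_of_nonneg (tsum_nonneg fun m : fiber k => hw0 m)]
  calc ∑' m : fiber k, a m * lam m ^ (-δ)
      ≤ ∑' m : fiber k, a m * (k : ℝ) ^ (-δ) :=
        Summable.tsum_le_tsum (fun m => mul_le_mul_of_nonneg_left
          (Real.rpow_le_rpow_of_nonpos hk (hfiber k m m.2).1 (by linarith)) (ha m))
          Summable.of_finite Summable.of_finite
    _ = (∑' m : fiber k, a m) * (k : ℝ) ^ (-δ) := tsum_mul_right
    _ ≤ C / (k : ℝ) ^ β * (k : ℝ) ^ (-δ) := by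
        gcongr
        exact (tsum_subtype_le_windowSum ha hlim (hfiber k)).trans
          (hwin _ (Nat.ceil_le.mp hkT))
    _ = C * (k : ℝ) ^ (-(β + δ)) := by
        rw [neg_add, Real.rpow_add hk, Real.rpow_neg hk.le β, div_eq_mul_inv, mul_assoc]

end Window

theorem summable_pi_prod {ι β : Type*} [Fintype ι] {w : β → ℝ} (hw0 : 0 ≤ w)
    (hw : Summable w) : Summable fun K : ι → β => ∏ i, w (K i) := by
  classical
  refine summable_of_sum_le (c := ∏ _i : ι, ∑' m, w m)
    (fun K => prod_nonneg fun i _ => hw0 _) fun u => ?_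
  set t := u.biUnion fun K => univ.image K
  have hu : u ⊆ Fintype.piFinset fun _ => t := fun K hK =>
    Fintype.mem_piFinset.mpr fun i => mem_biUnion.mpr ⟨K, hK, mem_image_of_mem K (mem_univ i)⟩
  calc ∑ K ∈ u, ∏ i, w (K i)
      ≤ ∑ K ∈ Fintype.piFinset fun _ => t, ∏ i, w (K i) :=
        sum_le_sum_of_subset_of_nonneg hu fun K _ _ => prod_nonneg fun i _ => hw0 _
    _ = ∏ _i : ι, ∑ m ∈ t, w m := (prod_univ_sum (fun _ => t) fun _ m => w m).symm
    _ ≤ ∏ _i : ι, ∑' m, w m :=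
        prod_le_prod (fun _ _ => sum_nonneg fun m _ => hw0 m)
          fun _ _ => hw.sum_le_tsum t fun m _ => hw0 m

theorem summable_subtype_of_le_mul_prod_erase {ι β : Type*} [Fintype ι] [DecidableEq ι]
    {w : β → ℝ} (hw0 : 0 ≤ w) (hw : Summable w) {P : (ι → β) → Prop} {f : (ι → β) → ℝ}
    (hf0 : 0 ≤ f) (D : ℝ)
    (hinj : ∀ (J J' : {J // P J}) (q : ι), (∀ i ≠ q, J.1 i = J'.1 i) → J = J')
    (hle : ∀ J : {J // P J}, ∃ q, f J ≤ D * ∏ i ∈ univ.erase q, w (J.1 i)) :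
    Summable fun J : {J // P J} => f J := by
  choose p hp using hle
  let Φ : {J // P J} → Σ q : ι, ({i // i ≠ q} → β) := fun J => ⟨p J, fun i => J.1 i⟩
  have hΦ : Φ.Injective := by
    rintro J J' hJJ'
    obtain ⟨hpJ, hrest⟩ := Sigma.mk.inj_iff.mp hJJ'
    refine hinj J J' (p J) fun i hi => ?_
    rw [← hpJ] at hrest
    exact congrFun (eq_of_heq hrest) ⟨i, hi⟩
  have hg : Summable fun x : Σ q : ι, ({i // i ≠ q} → β) => ∏ i, w (x.2 i) :=
    (summable_sigma_of_nonneg fun x => prod_nonneg fun i _ => hw0 _).mpr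
      ⟨fun _ => summable_pi_prod hw0 hw, Summable.of_finite⟩
  refine Summable.of_nonneg_of_le (fun J => hf0 J) (fun J => (hp J).trans_eq ?_)
    ((hg.comp_injective hΦ).mul_left D)
  simp only [Function.comp_apply, Φ]
  congr 1
  exact prod_subtype _ (fun i => by simp) (fun i => w (J.1 i))

theorem prod_le_mul_prod_erase_mul_rpow_neg {ι : Type*} [Fintype ι] [DecidableEq ι]
    {a x : ι → ℝ} (ha : 0 ≤ a) (hx : ∀ i, 0 < x i) {p : ι} (hmax : ∀ i, x i ≤ x p)
    {D δ : ℝ} (hD : 0 ≤ D) (hδ : 0 ≤ δ)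
    (hap : a p ≤ D * x p ^ (-((Fintype.card ι - 1) * δ))) :
    ∏ i, a i ≤ D * ∏ i ∈ univ.erase p, a i * x i ^ (-δ) := by
  have hpow : x p ^ (-((Fintype.card ι - 1) * δ)) = ∏ _i ∈ univ.erase p, x p ^ (-δ) := by
    rw [prod_const, card_erase_of_mem (mem_univ p), card_univ, ← Real.rpow_natCast,
      ← Real.rpow_mul (hx p).le, Nat.cast_pred (Fintype.card_pos_iff.mpr ⟨p⟩)]
    ring_nf
  calc ∏ i, a i = a p * ∏ i ∈ univ.erase p, a i := (mul_prod_erase _ _ (mem_univ p)).symm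
    _ ≤ D * (∏ i ∈ univ.erase p, x i ^ (-δ)) * ∏ i ∈ univ.erase p, a i := by
        gcongr
        · exact prod_nonneg fun i _ => ha i
        · refine hap.trans (mul_le_mul_of_nonneg_left ?_ hD)
          rw [hpow]
          exact prod_le_prod (fun i _ => (Real.rpow_nonneg (hx p).le _))
            fun i _ => Real.rpow_le_rpow_of_nonpos (hx i) (hmax i) (neg_nonpos.mpr hδ)
    _ = D * ∏ i ∈ univ.erase p, a i * x i ^ (-δ) := by
        rw [prod_mul_distrib]; ring

theorem eq_of_signed_sum_eq_of_eq_erase {ι β : Type*} [Fintype ι] {lam : β → ℝ}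
    (hlam : lam.Injective) {c : ι → ℝ} (hc : ∀ i, c i ≠ 0) {J J' : ι → β}
    (hsum : ∑ i, c i * lam (J i) = ∑ i, c i * lam (J' i)) {p : ι}
    (hoff : ∀ i ≠ p, J i = J' i) : J = J' := by
  classical
  have hrest : ∑ i ∈ univ.erase p, c i * lam (J i) = ∑ i ∈ univ.erase p, c i * lam (J' i) :=
    sum_congr rfl fun i hi => by rw [hoff i (ne_of_mem_erase hi)]
  rw [← add_sum_erase _ _ (mem_univ p), ← add_sum_erase _ _ (mem_univ p), hrest,
    add_left_inj, mul_right_inj' (hc p)] at hsum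
  funext i
  by_cases hi : i = p
  · exact hi ▸ hlam hsum
  · exact hoff i hi

theorem one_lt_add_div_sub_one {N β : ℝ} (hN : 1 < N) (hβ : 1 - 1 / N < β) :
    1 < β + β / (N - 1) := by
  have hN0 : (0 : ℝ) < N := by linarith
  have hmul : N - 1 < β * N := by
    simpa [sub_mul, hN0.ne'] using mul_lt_mul_of_pos_right hβ hN0
  have hsum : β + β / (N - 1) = β * N / (N - 1) := by
    have : N - 1 ≠ 0 := by linarith
    field_simp
    ring
  rw [hsum, one_lt_div (by linarith)]
  exact hmul

/-- Absolute convergence of the diagonal multidimensional sum. -/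
theorem stmt3
    (lam : ℕ → ℝ) (r : ℕ → ℂ) (β : ℝ) (n : ℕ)
    (hmono : StrictMono lam) (hpos : ∀ m, 0 < lam m)
    (hlim : Tendsto lam atTop atTop)
    (hn : 2 ≤ n) (hβ : β > 1 - 1 / (n : ℝ))
    (hcoef : ∃ C T₀ : ℝ, 0 < C ∧ 1 ≤ T₀ ∧ ∀ T ≥ T₀,
      (∑' m, if T ≤ lam m ∧ lam m ≤ T + 1 then ‖r m‖ else 0) ≤ C / T ^ β) :
    ∀ s ≤ n, Summable (fun J : {J : Fin n → ℕ //
        (∑ i : Fin n, (if (i : ℕ) < s then (1:ℝ) else -1) * lam (J i)) = 0} =>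
      ∏ i : Fin n, ‖r (J.1 i)‖) := by
  intro s _
  obtain ⟨C, T₀, -, -, hwin⟩ := hcoef
  have hN : (1 : ℝ) < n := by exact_mod_cast hn
  set δ := β / ((n : ℝ) - 1) with hδ
  have hβ0 : 0 ≤ β := (sub_nonneg.mpr (div_le_one_of_le₀ hN.le (by linarith))).trans hβ.le
  have hδ0 : 0 ≤ δ := div_nonneg hβ0 (by linarith)
  have hlim' : Tendsto lam cofinite atTop := Nat.cofinite_eq_atTop ▸ hlim
  have ha : 0 ≤ fun m => ‖r m‖ := fun m => norm_nonneg _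
  obtain ⟨D, hD0, hD⟩ := exists_le_mul_rpow_neg_of_windowSum_le ha hpos hlim' hwin
  have hw := summable_mul_rpow_neg_of_windowSum_le ha hpos hlim' hwin hδ0
    (one_lt_add_div_sub_one hN hβ)
  have : Nonempty (Fin n) := ⟨⟨0, by omega⟩⟩
  refine summable_subtype_of_le_mul_prod_erase (f := fun J => ∏ i, ‖r (J i)‖)
    (fun m => mul_nonneg (ha m) (Real.rpow_nonneg (hpos m).le _)) hw
    (fun J => prod_nonneg fun i _ => ha _) D
    (fun J J' q hoff => Subtype.ext (eq_of_signed_sum_eq_of_eq_erase hmono.injective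
      (fun i => by split_ifs <;> norm_num) (J.2.trans J'.2.symm) hoff)) fun J => ?_
  obtain ⟨q, hq⟩ := Finite.exists_max fun i => lam (J.1 i)
  have hexp : ((Fintype.card (Fin n) : ℝ) - 1) * δ = β := by
    have : (n : ℝ) - 1 ≠ 0 := by linarith
    rw [Fintype.card_fin, hδ]
    field_simp
  exact ⟨q, prod_le_mul_prod_erase_mul_rpow_neg (fun i => norm_nonneg (r (J.1 i)))
    (fun i => hpos (J.1 i)) hq hD0 hδ0 (hexp ▸ hD _)⟩
end

section
/- For $R>0$ define $h_R(t)=2^{3/2}\int_{-R}^R(\cosh R-\cosh u)^{1/2}e^{itu}\,du$. Then $h_R(i/2)=2\pi(\cosh R-1)$. -/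
/-!
Against the even weight `√(cosh R - cosh u)` only the even part `cosh (u / 2)` of `exp (-u / 2)`
contributes. Since `cosh R - cosh u = 2 (sinh² (R / 2) - sinh² (u / 2))`, the substitution
`s = sinh (u / 2)` turns the integral into `2√2` times the area `π a² / 2` of a half-disc of radius
`a = sinh (R / 2)`, and `cosh R - 1 = 2 a²`.
-/

open Real intervalIntegral

lemma cosh_eq_two_mul_sinh_half_sq_add_one (x : ℝ) : cosh x = 2 * sinh (x / 2) ^ 2 + 1 := by
  have h := cosh_two_mul (x / 2)
  rw [show 2 * (x / 2) = x by ring, cosh_sq] at h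
  linarith

lemma integral_mul_comp_neg_of_even {g f : ℝ → ℝ} (hg : ∀ x, g (-x) = g x) (R : ℝ) :
    ∫ u in -R..R, g u * f (-u) = ∫ u in -R..R, g u * f u := by
  simpa [hg] using integral_comp_neg (a := -R) (b := R) fun u ↦ g u * f u

lemma integral_mul_eq_integral_mul_even_part {g f : ℝ → ℝ} (hg : ∀ x, g (-x) = g x)
    (hg_cont : Continuous g) (hf_cont : Continuous f) (R : ℝ) :
    ∫ u in -R..R, g u * f u = ∫ u in -R..R, g u * ((f u + f (-u)) / 2) := by
  have hint : ∀ h : ℝ → ℝ, Continuous h →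
      IntervalIntegrable (fun u ↦ g u * h u) MeasureTheory.volume (-R) R := fun h hh ↦ (hg_cont.mul hh).intervalIntegrable _ _
  calc ∫ u in -R..R, g u * f u
      = ((∫ u in -R..R, g u * f u) + ∫ u in -R..R, g u * f (-u)) / 2 := by
        rw [integral_mul_comp_neg_of_even hg]
        ring
    _ = ∫ u in -R..R, g u * ((f u + f (-u)) / 2) := by
        rw [← integral_add (hint f hf_cont) (hint (fun u ↦ f (-u)) (by fun_prop)),
          ← intervalIntegral.integral_div]
        congr 1 with u
        ring

lemma integral_comp_sinh_half_mul_cosh_half {g : ℝ → ℝ} (hg : Continuous g) (a b : ℝ) :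
    ∫ u in a..b, g (sinh (u / 2)) * cosh (u / 2) = 2 * ∫ s in sinh (a / 2)..sinh (b / 2), g s := by
  have hderiv : ∀ x ∈ Set.uIcc a b, HasDerivAt (fun u ↦ sinh (u / 2)) (cosh (x / 2) / 2) x :=
    fun x _ ↦ ((hasDerivAt_id x).div_const 2).sinh.congr_deriv (by simp [div_eq_mul_inv])
  rw [← integral_comp_mul_deriv hderiv (by fun_prop) hg, ← integral_const_mul]
  congr 1 with u
  simp only [Function.comp_apply]
  ring

lemma integral_sqrt_sq_sub_sq {a : ℝ} (ha : 0 ≤ a) :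
    ∫ s in -a..a, √(a ^ 2 - s ^ 2) = π * a ^ 2 / 2 := by
  rcases ha.eq_or_lt with rfl | ha
  · simp
  have hscale : ∀ x : ℝ, √(a ^ 2 - (a * x) ^ 2) = a * √(1 - x ^ 2) := fun x ↦ by
    rw [show a ^ 2 - (a * x) ^ 2 = a ^ 2 * (1 - x ^ 2) by ring, sqrt_mul (sq_nonneg a),
      sqrt_sq ha.le]
  have := integral_comp_mul_left (a := -1) (b := 1) (fun s ↦ √(a ^ 2 - s ^ 2)) ha.ne'
  simp only [hscale, integral_const_mul, integral_sqrt_one_sub_sq, mul_neg, mul_one,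
    smul_eq_mul] at this
  field_simp at this ⊢
  linarith

/-- The evaluation `h_R(i/2) = 2π(cosh R - 1)`:
`2^{3/2} ∫_{-R}^R (cosh R - cosh u)^{1/2} e^{-u/2} du = 2π (cosh R - 1)`. -/
theorem stmt15 (R : ℝ) (hR : 0 < R) :
    (2:ℝ) ^ ((3:ℝ) / 2) *
      ∫ u in -R..R, Real.sqrt (Real.cosh R - Real.cosh u) * Real.exp (-u / 2)
    = 2 * Real.pi * (Real.cosh R - 1) := by
  have hsqrt : ∀ u, √(cosh R - cosh u) = √2 * √(sinh (R / 2) ^ 2 - sinh (u / 2) ^ 2) :=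
    fun u ↦ by
      rw [← sqrt_mul zero_le_two, cosh_eq_two_mul_sinh_half_sq_add_one R,
        cosh_eq_two_mul_sinh_half_sq_add_one u]
      ring_nf
  have hexp : ∀ u : ℝ, (exp (-u / 2) + exp (-(-u) / 2)) / 2 = cosh (u / 2) := fun u ↦ by
    rw [cosh_eq, neg_neg, neg_div, add_comm]
  have hpow : (2:ℝ) ^ ((3:ℝ) / 2) * √2 = 4 := by
    rw [sqrt_eq_rpow, ← rpow_add zero_lt_two]
    norm_num
  rw [integral_mul_eq_integral_mul_even_part (fun u ↦ by rw [cosh_neg]) (by fun_prop)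
    (by fun_prop)]
  simp only [hexp, hsqrt, mul_assoc]
  rw [integral_const_mul,
    integral_comp_sinh_half_mul_cosh_half (g := fun s ↦ √(sinh (R / 2) ^ 2 - s ^ 2))
      (by fun_prop), neg_div, sinh_neg,
    integral_sqrt_sq_sub_sq (sinh_nonneg_iff.2 (by linarith)),
    cosh_eq_two_mul_sinh_half_sq_add_one R, ← mul_assoc, hpow]
  ring
end
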